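/- Order preservation can fail when Q(S₀, I₀, T) ≠ 0: there exist constants 0 < β_q < β_n, γ > 0, T > 0, initial data S₀, I₀ ∈ (0,1) with S₀ + I₀ ≤ 1, such that with τ = [0,T], (S, I) solving the SIR system with transmission rate β^τ and initial data (S₀, I₀), and (S^δ, I^δ) solving it with initial data (S₀, I₀ − δ), one has R^δ(∞) > R(∞) for all sufficiently small δ > 0, where R = 1 − S − I and R^δ = 1 − S^δ − I^δ. -/

import Mathlib

/-
During the quarantine the epidemic is still growing (`γ ≤ βq S` on `[0, T]`). Then lowering `I₀`
by `δ` keeps `F = ∫₀ᵗ (I - I^δ)` nonnegative and `I - I^δ ≥ δ` on `[0, T]`, so that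
`∫₀ᵀ I - ∫₀ᵀ I^δ ≥ δ T`. After `T` the quantity `S + I - (γ/βn) log S` is conserved, which gives
the final-size relation
  `S(∞) - (γ/βn) log S(∞) = S₀ + I₀ - (γ/βn) log S₀ - γ (1 - βq/βn) ∫₀ᵀ I`,  `S(∞) < γ/βn`.
For `βq = 4`, `βn = 12`, `γ = 1`, `T = 2` the right-hand side increases by at least `(4/3 - 1) δ`
under the perturbation; as `x ↦ x - (γ/βn) log x` is decreasing on `(0, γ/βn]`, this forces
`S^δ(∞) < S(∞)`, that is `R^δ(∞) > R(∞)`.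
-/

open Set Filter MeasureTheory Topology Asymptotics
open scoped Classical

noncomputable section

/-- The transmission rate: `βq` on the quarantine set `τ`, `βn` elsewhere. -/
def betaFun (βq βn : ℝ) (τ : Set ℝ) : ℝ → ℝ := fun t => if t ∈ τ then βq else βn

/-- `(S, I)` solves the SIR system `S' = -β S I`, `I' = β S I - γ I` on `[0, ∞)`,
in integrated form. -/
def IsSIR (β : ℝ → ℝ) (γ : ℝ) (S I : ℝ → ℝ) : Prop :=
  ContinuousOn S (Ici 0) ∧ ContinuousOn I (Ici 0) ∧
    ∀ t ∈ Ici (0 : ℝ),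
      (S t = S 0 - ∫ s in (0 : ℝ)..t, β s * S s * I s) ∧
      (I t = I 0 + ∫ s in (0 : ℝ)..t, (β s * S s * I s - γ * I s))

/-- `(S, I, R)` solves the full SIR system `S' = -β S I`, `I' = β S I - γ I`,
`R' = γ I` on `[0, ∞)`, in integrated form. -/
def IsSIRFull (β : ℝ → ℝ) (γ : ℝ) (S I R : ℝ → ℝ) : Prop :=
  IsSIR β γ S I ∧ ∀ t ∈ Ici (0 : ℝ), R t = R 0 + ∫ s in (0 : ℝ)..t, γ * I s

/-- `τ` belongs to the class `𝒯`: a finite union of closed intervals contained in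
`[0, ∞)` with total length `T`. -/
def MemTau (T : ℝ) (τ : Set ℝ) : Prop :=
  τ ⊆ Ici 0 ∧
    (∃ (n : ℕ) (a b : Fin n → ℝ), (∀ i, a i ≤ b i) ∧ τ = ⋃ i, Icc (a i) (b i)) ∧
    volume τ = ENNReal.ofReal T

open Real

theorem hasDerivWithinAt_integral_Ici {g : ℝ → ℝ} {a b t : ℝ} (hg : ContinuousOn g (Icc a b))
    (ht : t ∈ Ico a b) : HasDerivWithinAt (fun u => ∫ s in a..u, g s) (g t) (Ici t) t := by
  have hmem : Icc a b ∈ 𝓝[>] t :=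
    mem_of_superset (Ioo_mem_nhdsGT_of_mem ht) Ioo_subset_Icc_self
  exact intervalIntegral.integral_hasDerivWithinAt_right
    ((hg.mono (Icc_subset_Icc_right ht.2.le)).intervalIntegrable_of_Icc ht.1)
    ((hg.stronglyMeasurableAtFilter_nhdsWithin measurableSet_Icc t).filter_mono
      (nhdsWithin_le_of_mem hmem))
    ((hg t (Ico_subset_Icc_self ht)).mono_of_mem_nhdsWithin hmem)

theorem continuousOn_integral_Icc {g : ℝ → ℝ} {a b : ℝ} (hg : ContinuousOn g (Icc a b)) :
    ContinuousOn (fun u => ∫ s in a..u, g s) (Icc a b) := by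
  rcases lt_or_ge b a with hba | hab
  · simp [Icc_eq_empty_of_lt hba]
  rw [← uIcc_of_le hab] at hg ⊢
  exact intervalIntegral.continuousOn_primitive_interval' hg.intervalIntegrable left_mem_uIcc

theorem eq_mul_exp_integral_of_eq_add_integral {f g : ℝ → ℝ} {a b : ℝ}
    (hf : ContinuousOn f (Icc a b)) (hg : ContinuousOn g (Icc a b))
    (heq : ∀ t ∈ Icc a b, f t = f a + ∫ s in a..t, g s * f s) :
    ∀ t ∈ Icc a b, f t = f a * exp (∫ s in a..t, g s) := by
  set G := fun u => ∫ s in a..u, g s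
  have hconst : ∀ t ∈ Icc a b, f t * exp (-G t) = f a * exp (-G a) := by
    refine constant_of_has_deriv_right_zero
      (hf.mul (continuousOn_integral_Icc hg).neg.rexp) fun t ht => ?_
    have hIcc : Icc a b ∈ 𝓝[Ici t] t :=
      mem_nhdsWithin.2 ⟨Iio b, isOpen_Iio, ht.2, fun y hy => ⟨ht.1.trans hy.2, hy.1.le⟩⟩
    have hf' : HasDerivWithinAt f (g t * f t) (Ici t) t :=
      ((hasDerivWithinAt_integral_Ici (hg.mul hf) ht).const_add (f a)).congr_of_eventuallyEq
        (eventually_of_mem hIcc heq) (heq t (Ico_subset_Icc_self ht))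
    exact (hf'.mul (hasDerivWithinAt_integral_Ici hg ht).neg.exp).congr_deriv
      (by simp only [Pi.neg_apply]; ring)
  intro t ht
  have := hconst t ht
  simp only [G, intervalIntegral.integral_same, neg_zero, exp_zero, mul_one] at this
  rw [← this, mul_assoc, ← exp_add, neg_add_cancel, exp_zero, mul_one]

theorem ContinuousOn.intervalIntegrable_of_Ici {f : ℝ → ℝ} {c a b : ℝ}
    (hf : ContinuousOn f (Ici c)) (ha : c ≤ a) (hb : c ≤ b) : IntervalIntegrable f volume a b :=
  (hf.mono fun _ hx => (le_inf ha hb).trans hx.1).intervalIntegrable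

theorem integral_nonneg_of_pos_of_integral_eq_zero {u : ℝ → ℝ} {a b : ℝ}
    (hu : ContinuousOn u (Icc a b)) (hpos : ∀ t ∈ Ico a b, ∫ s in a..t, u s = 0 → 0 < u t) :
    ∀ t ∈ Icc a b, 0 ≤ ∫ s in a..t, u s := by
  intro t ht
  have := image_le_of_deriv_right_lt_deriv_boundary (f := fun t => -∫ s in a..t, u s)
    (B := fun _ => 0) (B' := fun _ => 0) (continuousOn_integral_Icc hu).neg
    (fun x hx => (hasDerivWithinAt_integral_Ici hu hx).neg) (by simp)
    (fun _ => hasDerivAt_const _ _)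
    (fun x hx hx0 => neg_lt_zero.2 (hpos x hx (neg_eq_zero.1 hx0))) ht
  simpa using this

theorem tendsto_integral_add_one {f : ℝ → ℝ} {J : ℝ} (hf : ContinuousOn f (Ici 0))
    (hJ : Tendsto f atTop (𝓝 J)) : Tendsto (fun t => ∫ s in t..t + 1, f s) atTop (𝓝 J) := by
  refine Metric.tendsto_atTop.2 fun ε hε => ?_
  obtain ⟨N, hN⟩ := Metric.tendsto_atTop.1 hJ (ε / 2) (half_pos hε)
  refine ⟨max N 0, fun t ht => ?_⟩
  have hNt : N ≤ t := le_of_max_le_left ht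
  have h0t : 0 ≤ t := le_of_max_le_right ht
  have hbound : ‖∫ s in t..t + 1, (f s - J)‖ ≤ ε / 2 * |t + 1 - t| :=
    intervalIntegral.norm_integral_le_of_norm_le_const fun s hs =>
      (hN s (hNt.trans (uIoc_of_le (by linarith : t ≤ t + 1) ▸ hs).1.le)).le
  rw [intervalIntegral.integral_sub
    (hf.intervalIntegrable_of_Ici h0t (by linarith))
    intervalIntegrable_const, intervalIntegral.integral_const] at hbound
  rw [Real.dist_eq]
  simp only [add_sub_cancel_left, abs_one, mul_one, one_smul, Real.norm_eq_abs] at hbound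
  linarith

theorem eq_zero_of_tendsto_of_tendsto_integral {f : ℝ → ℝ} {J ℓ : ℝ}
    (hf : ContinuousOn f (Ici 0)) (hJ : Tendsto f atTop (𝓝 J))
    (hℓ : Tendsto (fun t => ∫ s in 0..t, f s) atTop (𝓝 ℓ)) : J = 0 := by
  have h0 : Tendsto (fun t => ∫ s in t..t + 1, f s) atTop (𝓝 (ℓ - ℓ)) := by
    refine ((hℓ.comp (tendsto_atTop_add_const_right _ 1 tendsto_id)).sub hℓ).congr' ?_
    filter_upwards [eventually_ge_atTop 0] with t ht
    exact intervalIntegral.integral_interval_sub_left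
      (hf.intervalIntegrable_of_Ici le_rfl (by linarith : (0 : ℝ) ≤ t + 1))
      (hf.intervalIntegrable_of_Ici le_rfl ht)
  exact tendsto_nhds_unique (tendsto_integral_add_one hf hJ) (sub_self ℓ ▸ h0)

theorem antitoneOn_sub_mul_log (c : ℝ) : AntitoneOn (fun x => x - c * log x) (Ioc 0 c) := by
  intro x hx y hy hxy
  have hlog := one_sub_inv_le_log_of_pos (div_pos hy.1 hx.1)
  rw [log_div hy.1.ne' hx.1.ne', inv_div] at hlog
  have hgap : y - x ≤ c * (1 - x / y) := by
    have : c * (1 - x / y) = y - x + (y - x) * (c - y) / y := by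
      field_simp [hy.1.ne']
      ring
    rw [this]
    have : 0 ≤ (y - x) * (c - y) / y :=
      div_nonneg (mul_nonneg (by linarith) (by linarith [hy.2])) hy.1.le
    linarith
  have := mul_le_mul_of_nonneg_left hlog (hx.1.le.trans (hxy.trans hy.2))
  show y - c * log y ≤ x - c * log x
  linarith

theorem exp_two_lt_nine : exp 2 < 9 := by
  have := exp_one_lt_d9
  rw [show (2 : ℝ) = 1 + 1 by norm_num, exp_add]
  nlinarith [exp_pos 1]

theorem intervalIntegrable_betaFun (βq βn T a b : ℝ) :
    IntervalIntegrable (betaFun βq βn (Icc 0 T)) volume a b := by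
  refine (intervalIntegrable_const (c := |βq| + |βn|)).mono_fun
    (Measurable.ite measurableSet_Icc measurable_const measurable_const).aestronglyMeasurable
    (Eventually.of_forall fun s => ?_)
  simp only [betaFun, Real.norm_eq_abs, abs_of_nonneg (add_nonneg (abs_nonneg βq) (abs_nonneg βn))]
  split_ifs <;> linarith [abs_nonneg βq, abs_nonneg βn]

theorem betaFun_of_mem_Ioc {βq βn T s : ℝ} (hs : s ∈ Ioc 0 T) :
    betaFun βq βn (Icc 0 T) s = βq :=
  if_pos (Ioc_subset_Icc_self hs)

theorem betaFun_of_lt {βq βn T s : ℝ} (hs : T < s) : betaFun βq βn (Icc 0 T) s = βn :=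
  if_neg fun h => hs.not_ge h.2

namespace IsSIR

variable {βq βn γ T δ : ℝ} {S I Sd Id : ℝ → ℝ}

theorem intervalIntegrable_infection (h : IsSIR (betaFun βq βn (Icc 0 T)) γ S I) {a b : ℝ}
    (ha : 0 ≤ a) (hb : 0 ≤ b) :
    IntervalIntegrable (fun s => betaFun βq βn (Icc 0 T) s * S s * I s) volume a b := by
  simpa only [mul_assoc, Pi.mul_apply] using
    (intervalIntegrable_betaFun βq βn T a b).mul_continuousOn
      ((h.1.mul h.2.1).mono fun _ hs => (le_inf ha hb).trans hs.1)

theorem add_eq (h : IsSIR (betaFun βq βn (Icc 0 T)) γ S I) {t : ℝ} (ht : 0 ≤ t) :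
    S t + I t = S 0 + I 0 - γ * ∫ s in 0..t, I s := by
  obtain ⟨hS, hI⟩ := h.2.2 t ht
  rw [hS, hI, intervalIntegral.integral_sub (h.intervalIntegrable_infection le_rfl ht)
    ((h.2.1.intervalIntegrable_of_Ici le_rfl ht).const_mul γ), intervalIntegral.integral_const_mul]
  ring

theorem S_eq_sub_integral (h : IsSIR (betaFun βq βn (Icc 0 T)) γ S I) {a t : ℝ} (ha : 0 ≤ a)
    (hat : a ≤ t) : S t = S a - ∫ s in a..t, betaFun βq βn (Icc 0 T) s * S s * I s := by
  rw [(h.2.2 t (ha.trans hat)).1, (h.2.2 a ha).1, ← intervalIntegral.integral_interval_sub_left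
    (h.intervalIntegrable_infection le_rfl (ha.trans hat))
    (h.intervalIntegrable_infection le_rfl ha)]
  ring

theorem I_eq_add_integral (h : IsSIR (betaFun βq βn (Icc 0 T)) γ S I) {a t : ℝ} (ha : 0 ≤ a)
    (hat : a ≤ t) :
    I t = I a + ∫ s in a..t, (betaFun βq βn (Icc 0 T) s * S s * I s - γ * I s) := by
  have hint : ∀ {b}, 0 ≤ b → IntervalIntegrable
      (fun s => betaFun βq βn (Icc 0 T) s * S s * I s - γ * I s) volume 0 b := fun hb =>
    (h.intervalIntegrable_infection le_rfl hb).sub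
      ((h.2.1.intervalIntegrable_of_Ici le_rfl hb).const_mul γ)
  rw [(h.2.2 t (ha.trans hat)).2, (h.2.2 a ha).2,
    ← intervalIntegral.integral_interval_sub_left (hint (ha.trans hat)) (hint ha)]
  ring

theorem S_eq_mul_exp (h : IsSIR (betaFun βq βn (Icc 0 T)) γ S I) {a t b : ℝ} (ha : 0 ≤ a)
    (hat : a ≤ t) (hβ : ∀ s ∈ Ioc a t, betaFun βq βn (Icc 0 T) s = b) :
    S t = S a * exp (-(b * ∫ s in a..t, I s)) := by
  have hrep := eq_mul_exp_integral_of_eq_add_integral (g := fun s => -(b * I s))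
    (h.1.mono fun _ hs => ha.trans hs.1) ((h.2.1.mono fun _ hs => ha.trans hs.1).const_smul b).neg
    (fun r hr => ?_) t ⟨hat, le_rfl⟩
  · rwa [intervalIntegral.integral_neg, intervalIntegral.integral_const_mul] at hrep
  rw [h.S_eq_sub_integral ha hr.1, sub_eq_add_neg, ← intervalIntegral.integral_neg]
  congr 1
  refine intervalIntegral.integral_congr_ae (Eventually.of_forall fun s hs => ?_)
  rw [uIoc_of_le hr.1] at hs
  rw [hβ s ⟨hs.1, hs.2.trans hr.2⟩]
  ring

theorem I_eq_mul_exp (h : IsSIR (betaFun βq βn (Icc 0 T)) γ S I) {a t b : ℝ} (ha : 0 ≤ a)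
    (hat : a ≤ t) (hβ : ∀ s ∈ Ioc a t, betaFun βq βn (Icc 0 T) s = b) :
    I t = I a * exp (∫ s in a..t, (b * S s - γ)) := by
  refine eq_mul_exp_integral_of_eq_add_integral (g := fun s => b * S s - γ)
    (h.2.1.mono fun _ hs => ha.trans hs.1)
    (((h.1.mono fun _ hs => ha.trans hs.1).const_smul b).sub continuousOn_const)
    (fun r hr => ?_) t ⟨hat, le_rfl⟩
  rw [h.I_eq_add_integral ha hr.1]
  congr 1
  refine intervalIntegral.integral_congr_ae (Eventually.of_forall fun s hs => ?_)
  rw [uIoc_of_le hr.1] at hs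
  rw [hβ s ⟨hs.1, hs.2.trans hr.2⟩]
  ring

theorem S_eq_mul_exp_of_le (h : IsSIR (betaFun βq βn (Icc 0 T)) γ S I) {t : ℝ}
    (ht : t ∈ Icc 0 T) : S t = S 0 * exp (-(βq * ∫ s in 0..t, I s)) :=
  h.S_eq_mul_exp le_rfl ht.1 fun _ hs => betaFun_of_mem_Ioc ⟨hs.1, hs.2.trans ht.2⟩

theorem I_eq_mul_exp_of_le (h : IsSIR (betaFun βq βn (Icc 0 T)) γ S I) {t : ℝ}
    (ht : t ∈ Icc 0 T) : I t = I 0 * exp (∫ s in 0..t, (βq * S s - γ)) :=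
  h.I_eq_mul_exp le_rfl ht.1 fun _ hs => betaFun_of_mem_Ioc ⟨hs.1, hs.2.trans ht.2⟩

theorem S_eq_mul_exp_of_ge (h : IsSIR (betaFun βq βn (Icc 0 T)) γ S I) {a t : ℝ} (ha : 0 ≤ a)
    (hTa : T ≤ a) (hat : a ≤ t) : S t = S a * exp (-(βn * ∫ s in a..t, I s)) :=
  h.S_eq_mul_exp ha hat fun _ hs => betaFun_of_lt (hTa.trans_lt hs.1)

theorem I_eq_mul_exp_of_ge (h : IsSIR (betaFun βq βn (Icc 0 T)) γ S I) {a t : ℝ} (ha : 0 ≤ a)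
    (hTa : T ≤ a) (hat : a ≤ t) : I t = I a * exp (∫ s in a..t, (βn * S s - γ)) :=
  h.I_eq_mul_exp ha hat fun _ hs => betaFun_of_lt (hTa.trans_lt hs.1)

theorem S_pos (h : IsSIR (betaFun βq βn (Icc 0 T)) γ S I) (hT : 0 ≤ T) (hS0 : 0 < S 0) {t : ℝ}
    (ht : 0 ≤ t) : 0 < S t := by
  rcases le_total t T with htT | hTt
  · rw [h.S_eq_mul_exp_of_le ⟨ht, htT⟩]; positivity
  · have : 0 < S T := by rw [h.S_eq_mul_exp_of_le ⟨hT, le_rfl⟩]; positivity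
    rw [h.S_eq_mul_exp_of_ge hT le_rfl hTt]; positivity

theorem I_pos (h : IsSIR (betaFun βq βn (Icc 0 T)) γ S I) (hT : 0 ≤ T) (hI0 : 0 < I 0) {t : ℝ}
    (ht : 0 ≤ t) : 0 < I t := by
  rcases le_total t T with htT | hTt
  · rw [h.I_eq_mul_exp_of_le ⟨ht, htT⟩]; positivity
  · have : 0 < I T := by rw [h.I_eq_mul_exp_of_le ⟨hT, le_rfl⟩]; positivity
    rw [h.I_eq_mul_exp_of_ge hT le_rfl hTt]; positivity

theorem integral_I_nonneg (h : IsSIR (betaFun βq βn (Icc 0 T)) γ S I) (hT : 0 ≤ T)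
    (hI0 : 0 < I 0) {a b : ℝ} (ha : 0 ≤ a) (hab : a ≤ b) : 0 ≤ ∫ s in a..b, I s :=
  intervalIntegral.integral_nonneg hab fun _ hs => (h.I_pos hT hI0 (ha.trans hs.1)).le

theorem I_le_mul_exp (h : IsSIR (betaFun βq βn (Icc 0 T)) γ S I) (hβq : 0 ≤ βq)
    (hS0 : 0 ≤ S 0) (hI0 : 0 < I 0) {t : ℝ} (ht : t ∈ Icc 0 T) :
    I t ≤ I 0 * exp ((βq * S 0 - γ) * t) := by
  have hS_le : ∀ s ∈ Icc 0 t, S s ≤ S 0 := fun s hs => by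
    have hsT : s ∈ Icc 0 T := ⟨hs.1, hs.2.trans ht.2⟩
    rw [h.S_eq_mul_exp_of_le hsT]
    have := h.integral_I_nonneg (ht.1.trans ht.2) hI0 le_rfl hs.1
    exact mul_le_of_le_one_right hS0 (exp_le_one_iff.2 (by nlinarith))
  have hint : ∫ s in 0..t, (βq * S s - γ) ≤ (βq * S 0 - γ) * t := by
    have := intervalIntegral.integral_mono_on (μ := volume) ht.1
      (((continuousOn_const.mul h.1).sub continuousOn_const).intervalIntegrable_of_Ici le_rfl ht.1)
      intervalIntegrable_const fun s hs => sub_le_sub_right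
        (mul_le_mul_of_nonneg_left (hS_le s hs) hβq) γ
    rwa [intervalIntegral.integral_const, smul_eq_mul, sub_zero, mul_comm t] at this
  rw [h.I_eq_mul_exp_of_le ht]
  gcongr

theorem tendsto_integral_I (h : IsSIR (betaFun βq βn (Icc 0 T)) γ S I) (hγ : γ ≠ 0) {L : ℝ}
    (hL : Tendsto (fun t => 1 - S t - I t) atTop (𝓝 L)) :
    Tendsto (fun t => ∫ s in 0..t, I s) atTop (𝓝 ((L - 1 + (S 0 + I 0)) / γ)) := by
  refine (((hL.sub_const 1).add_const (S 0 + I 0)).div_const γ).congr' ?_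
  filter_upwards [eventually_ge_atTop 0] with t ht
  rw [div_eq_iff hγ]
  linarith [h.add_eq ht]

theorem tendsto_S (h : IsSIR (betaFun βq βn (Icc 0 T)) γ S I) (hT : 0 ≤ T) {ℓ : ℝ}
    (hℓ : Tendsto (fun t => ∫ s in 0..t, I s) atTop (𝓝 ℓ)) :
    Tendsto S atTop (𝓝 (S T * exp (-(βn * (ℓ - ∫ s in 0..T, I s))))) := by
  have hcont : Continuous fun x => S T * exp (-(βn * (x - ∫ s in 0..T, I s))) := by fun_prop
  refine (hcont.tendsto ℓ |>.comp hℓ).congr' ?_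
  filter_upwards [eventually_ge_atTop T] with t ht
  rw [h.S_eq_mul_exp_of_ge hT le_rfl ht, ← intervalIntegral.integral_interval_sub_left
    (h.2.1.intervalIntegrable_of_Ici le_rfl (hT.trans ht))
    (h.2.1.intervalIntegrable_of_Ici le_rfl hT)]
  rfl

theorem tendsto_I (h : IsSIR (betaFun βq βn (Icc 0 T)) γ S I) {Sinf ℓ : ℝ}
    (hS : Tendsto S atTop (𝓝 Sinf)) (hℓ : Tendsto (fun t => ∫ s in 0..t, I s) atTop (𝓝 ℓ)) :
    Tendsto I atTop (𝓝 0) := by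
  have hI : Tendsto I atTop (𝓝 (S 0 + I 0 - γ * ℓ - Sinf)) := by
    refine (((hℓ.const_mul γ).const_sub (S 0 + I 0)).sub hS).congr' ?_
    filter_upwards [eventually_ge_atTop 0] with t ht
    linarith [h.add_eq ht]
  rwa [eq_zero_of_tendsto_of_tendsto_integral h.2.1 hI hℓ] at hI

theorem log_S_eq (h : IsSIR (betaFun βq βn (Icc 0 T)) γ S I) (hT : 0 ≤ T) (hS0 : 0 < S 0)
    {t : ℝ} (ht : T ≤ t) :
    log (S t) = log (S 0) - βq * (∫ s in 0..T, I s) - βn * ∫ s in T..t, I s := by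
  rw [h.S_eq_mul_exp_of_ge hT le_rfl ht, h.S_eq_mul_exp_of_le ⟨hT, le_rfl⟩,
    log_mul (by positivity) (exp_ne_zero _), log_mul hS0.ne' (exp_ne_zero _), log_exp, log_exp]
  ring

theorem final_size_of_tendsto (h : IsSIR (betaFun βq βn (Icc 0 T)) γ S I) (hT : 0 ≤ T)
    (hβn : βn ≠ 0) (hS0 : 0 < S 0) {Sinf : ℝ} (hS : Tendsto S atTop (𝓝 Sinf)) (hSinf : 0 < Sinf)
    (hI : Tendsto I atTop (𝓝 0)) :
    Sinf - γ / βn * log Sinf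
      = S 0 + I 0 - γ / βn * log (S 0) - γ * (1 - βq / βn) * ∫ s in 0..T, I s := by
  have hconserved : ∀ t ≥ T, S t + I t - γ / βn * log (S t)
      = S 0 + I 0 - γ / βn * log (S 0) - γ * (1 - βq / βn) * ∫ s in 0..T, I s := by
    intro t ht
    rw [h.add_eq (hT.trans ht), h.log_S_eq hT hS0 ht, ← intervalIntegral.integral_interval_sub_left
      (h.2.1.intervalIntegrable_of_Ici le_rfl (hT.trans ht))
      (h.2.1.intervalIntegrable_of_Ici le_rfl hT)]
    field_simp
    ring
  have hlim : Tendsto (fun t => S t + I t - γ / βn * log (S t)) atTop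
      (𝓝 (Sinf + 0 - γ / βn * log Sinf)) :=
    (hS.add hI).sub (((continuousAt_log hSinf.ne').tendsto.comp hS).const_mul _)
  simpa using tendsto_nhds_unique hlim (tendsto_const_nhds.congr'
    (eventually_atTop.2 ⟨T, fun t ht => (hconserved t ht).symm⟩))

theorem lt_div_of_tendsto (h : IsSIR (betaFun βq βn (Icc 0 T)) γ S I) (hT : 0 ≤ T)
    (hβn : 0 < βn) (hS0 : 0 < S 0) (hI0 : 0 < I 0) {Sinf : ℝ} (hS : Tendsto S atTop (𝓝 Sinf))
    (hI : Tendsto I atTop (𝓝 0)) : Sinf < γ / βn := by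
  by_contra! hge
  have hS_ge : ∀ t ≥ T, Sinf ≤ S t := fun t ht => by
    refine le_of_tendsto hS (eventually_atTop.2 ⟨t, fun r hr => ?_⟩)
    rw [h.S_eq_mul_exp_of_ge (hT.trans ht) ht hr]
    have := h.integral_I_nonneg hT hI0 (hT.trans ht) hr
    exact mul_le_of_le_one_right (h.S_pos hT hS0 (hT.trans ht)).le
      (exp_le_one_iff.2 (by nlinarith))
  have hI_ge : ∀ t ≥ T, I T ≤ I t := fun t ht => by
    rw [h.I_eq_mul_exp_of_ge hT le_rfl ht]
    refine le_mul_of_one_le_right (h.I_pos hT hI0 hT).le (one_le_exp ?_)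
    refine intervalIntegral.integral_nonneg ht fun s hs => ?_
    have := (div_le_iff₀ hβn).1 (hge.trans (hS_ge s hs.1))
    linarith
  exact (h.I_pos hT hI0 hT).not_ge (ge_of_tendsto hI (eventually_atTop.2 ⟨T, hI_ge⟩))

theorem final_size (h : IsSIR (betaFun βq βn (Icc 0 T)) γ S I) (hT : 0 ≤ T) (hγ : γ ≠ 0)
    (hβn : 0 < βn) (hS0 : 0 < S 0) (hI0 : 0 < I 0) {L : ℝ}
    (hL : Tendsto (fun t => 1 - S t - I t) atTop (𝓝 L)) :
    0 < 1 - L ∧ 1 - L < γ / βn ∧ (1 - L) - γ / βn * log (1 - L)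
      = S 0 + I 0 - γ / βn * log (S 0) - γ * (1 - βq / βn) * ∫ s in 0..T, I s := by
  have hℓ := h.tendsto_integral_I hγ hL
  have hS := h.tendsto_S hT hℓ
  have hI := h.tendsto_I hS hℓ
  have hSinf : 1 - L = S T * exp (-(βn * ((L - 1 + (S 0 + I 0)) / γ - ∫ s in 0..T, I s))) := by
    have := tendsto_nhds_unique hL ((tendsto_const_nhds.sub hS).sub hI)
    linarith
  rw [← hSinf] at hS
  have hpos : 0 < 1 - L := hSinf ▸ mul_pos (h.S_pos hT hS0 hT) (exp_pos _)
  exact ⟨hpos, h.lt_div_of_tendsto hT hβn hS0 hI0 hS hI,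
    h.final_size_of_tendsto hT hβn.ne' hS0 hS hpos hI⟩

theorem le_sub_of_integral_sub_nonneg (h : IsSIR (betaFun βq βn (Icc 0 T)) γ S I)
    (hd : IsSIR (betaFun βq βn (Icc 0 T)) γ Sd Id) (hS0 : 0 ≤ S 0) (hSd0 : Sd 0 = S 0)
    (hId0 : Id 0 = I 0 - δ) (hgrow : ∀ t ∈ Icc 0 T, γ ≤ βq * S t) {t : ℝ} (ht : t ∈ Icc 0 T)
    (hF : 0 ≤ (∫ s in 0..t, I s) - ∫ s in 0..t, Id s) : δ ≤ I t - Id t := by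
  set F := (∫ s in 0..t, I s) - ∫ s in 0..t, Id s
  -- conservation gives `I t - Id t = δ - γ F + (Sd t - S t)`, and `Sd t = S t * exp (βq F)`
  have hSd : Sd t = S t * exp (βq * F) := by
    rw [h.S_eq_mul_exp_of_le ht, hd.S_eq_mul_exp_of_le ht, hSd0, mul_assoc, ← exp_add]
    congr 2
    simp only [F]
    ring
  have hSt : 0 ≤ S t := by rw [h.S_eq_mul_exp_of_le ht]; positivity
  have hgain : S t * (βq * F) ≤ Sd t - S t := by
    rw [hSd]
    nlinarith [mul_le_mul_of_nonneg_left (add_one_le_exp (βq * F)) hSt]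
  have hloss : γ * F ≤ S t * (βq * F) := by
    nlinarith [mul_le_mul_of_nonneg_right (hgrow t ht) hF]
  linarith [h.add_eq ht.1, hd.add_eq ht.1]

theorem le_integral_sub_integral (h : IsSIR (betaFun βq βn (Icc 0 T)) γ S I)
    (hd : IsSIR (betaFun βq βn (Icc 0 T)) γ Sd Id) (hT : 0 ≤ T) (hS0 : 0 ≤ S 0)
    (hSd0 : Sd 0 = S 0) (hId0 : Id 0 = I 0 - δ) (hδ : 0 < δ)
    (hgrow : ∀ t ∈ Icc 0 T, γ ≤ βq * S t) :
    δ * T ≤ (∫ s in 0..T, I s) - ∫ s in 0..T, Id s := by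
  have hu : ContinuousOn (fun s => I s - Id s) (Icc 0 T) :=
    (h.2.1.sub hd.2.1).mono fun _ hs => hs.1
  have hsplit : ∀ t ∈ Icc 0 T,
      ∫ s in 0..t, (I s - Id s) = (∫ s in 0..t, I s) - ∫ s in 0..t, Id s := fun t ht =>
    intervalIntegral.integral_sub (h.2.1.intervalIntegrable_of_Ici le_rfl ht.1)
      (hd.2.1.intervalIntegrable_of_Ici le_rfl ht.1)
  have hδle : ∀ t ∈ Icc 0 T, 0 ≤ ∫ s in 0..t, (I s - Id s) → δ ≤ I t - Id t := fun t ht hF =>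
    h.le_sub_of_integral_sub_nonneg hd hS0 hSd0 hId0 hgrow ht (hsplit t ht ▸ hF)
  have hnonneg := integral_nonneg_of_pos_of_integral_eq_zero hu fun t ht hF =>
    hδ.trans_le (hδle t (Ico_subset_Icc_self ht) hF.ge)
  have := intervalIntegral.integral_mono_on (μ := volume) hT intervalIntegrable_const
    (hu.intervalIntegrable_of_Icc hT) fun t ht => hδle t ht (hnonneg t ht)
  rw [intervalIntegral.integral_const, hsplit T ⟨hT, le_rfl⟩, smul_eq_mul, sub_zero] at this
  linarith

theorem quarter_le_S (h : IsSIR (betaFun 4 12 (Icc 0 2)) 1 S I)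
    (hS0 : S 0 = 1 / 2) (hI0 : 0 < I 0) (hI0' : I 0 ≤ 1 / 200) {t : ℝ} (ht : t ∈ Icc 0 2) :
    1 / 4 ≤ S t := by
  have hI : ∀ s ∈ Icc (0 : ℝ) 2, I s ≤ 9 / 200 := fun s hs => by
    have hgrowth := h.I_le_mul_exp (by norm_num) (by rw [hS0]; norm_num) hI0 hs
    have : exp ((4 * S 0 - 1) * s) < 9 :=
      lt_of_le_of_lt (exp_le_exp.2 (by rw [hS0]; linarith [hs.2])) exp_two_lt_nine
    nlinarith
  have hint : ∫ s in 0..t, I s ≤ 9 / 100 := by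
    have := intervalIntegral.integral_mono_on (μ := volume) ht.1
      (h.2.1.intervalIntegrable_of_Ici le_rfl ht.1) intervalIntegrable_const
      fun s hs => hI s ⟨hs.1, hs.2.trans ht.2⟩
    rw [intervalIntegral.integral_const, smul_eq_mul, sub_zero] at this
    linarith [ht.2]
  rw [h.S_eq_mul_exp_of_le ht, hS0]
  nlinarith [add_one_le_exp (-(4 * ∫ s in 0..t, I s))]

end IsSIR

/-- order preservation can fail: there are constants
`0 < β_q < βₙ`, `γ, T > 0` and initial data `S₀, I₀ ∈ (0,1)`, `S₀ + I₀ ≤ 1`, such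
that with `τ = [0, T]`, lowering the initial infected fraction to `I₀ - δ` yields
`R^δ(∞) > R(∞)` for all sufficiently small `δ > 0`, where `R = 1 - S - I`. -/
theorem order_preservation_can_fail :
    ∃ βq βn γ T S₀ I₀ : ℝ,
      0 < βq ∧ βq < βn ∧ 0 < γ ∧ 0 < T ∧
      S₀ ∈ Ioo (0 : ℝ) 1 ∧ I₀ ∈ Ioo (0 : ℝ) 1 ∧ S₀ + I₀ ≤ 1 ∧
      ∀ S I : ℝ → ℝ, IsSIR (betaFun βq βn (Icc 0 T)) γ S I →
        S 0 = S₀ → I 0 = I₀ →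
        ∀ L : ℝ, Tendsto (fun t => 1 - S t - I t) atTop (𝓝 L) →
        ∃ ε > (0 : ℝ), ∀ δ ∈ Ioo (0 : ℝ) ε,
          ∀ Sd Id : ℝ → ℝ, IsSIR (betaFun βq βn (Icc 0 T)) γ Sd Id →
            Sd 0 = S₀ → Id 0 = I₀ - δ →
            ∀ Ld : ℝ, Tendsto (fun t => 1 - Sd t - Id t) atTop (𝓝 Ld) → L < Ld := by
  refine ⟨4, 12, 1, 2, 1 / 2, 1 / 200, by norm_num, by norm_num, by norm_num, by norm_num,
    ⟨by norm_num, by norm_num⟩, ⟨by norm_num, by norm_num⟩, by norm_num, ?_⟩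
  intro S I h hS0 hI0 L hL
  refine ⟨1 / 200, by norm_num, fun δ ⟨hδ, hδε⟩ Sd Id hd hSd0 hId0 Ld hLd => ?_⟩
  obtain ⟨hpos, hlt, hsize⟩ := h.final_size (by norm_num) one_ne_zero (by norm_num)
    (by rw [hS0]; norm_num) (by rw [hI0]; norm_num) hL
  obtain ⟨hposd, hltd, hsized⟩ := hd.final_size (by norm_num) one_ne_zero (by norm_num)
    (by rw [hSd0]; norm_num) (by rw [hId0]; linarith) hLd
  have hgap := h.le_integral_sub_integral hd (by norm_num) (by rw [hS0]; norm_num)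
    (hSd0.trans hS0.symm) (by rw [hId0, hI0]) hδ fun t ht => by
      linarith [h.quarter_le_S hS0 (by rw [hI0]; norm_num) (by rw [hI0]) ht]
  have hdecrease : (1 - L) - 1 / 12 * log (1 - L) < (1 - Ld) - 1 / 12 * log (1 - Ld) := by
    rw [hsize, hsized, hSd0, hId0, hS0, hI0]
    linarith
  by_contra! hle
  exact hdecrease.not_ge
    (antitoneOn_sub_mul_log _ ⟨hpos, hlt.le⟩ ⟨hposd, hltd.le⟩ (by linarith))
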